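/- arXiv:1210.3202 — 2 statements merged into one kernel-verified Lean document; each statement's English description precedes it below -/
import Mathlib

section
/- Let φ be a continuous flow on a compact metric space X. For every δ > 0 there is δ' > 0 such that if x, y ∈ X satisfy d_F(x,y) < δ', then there exists h ∈ ℋ⁺ with d(φ_{h(t)}x, φ_t y) < δ for all t ≥ 0. -/
open Metric Set

/-- A continuous flow on `X`. -/
def IsFlow {X : Type*} [TopologicalSpace X] (φ : ℝ → X → X) : Prop :=
  Continuous (fun p : ℝ × X => φ p.1 p.2) ∧
  (∀ x, φ 0 x = x) ∧
  (∀ s t x, φ (s + t) x = φ s (φ t x))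

/-- A singular point of the flow (an equilibrium). -/
def IsSingular {X : Type*} (φ : ℝ → X → X) (x : X) : Prop := ∀ t : ℝ, φ t x = x

/-- A reparameterization: an increasing homeomorphism of `ℝ` fixing `0`. -/
def Reparam (h : ℝ → ℝ) : Prop :=
  StrictMono h ∧ Continuous h ∧ Function.Surjective h ∧ h 0 = 0

/-- A reparameterization with rests: continuous, surjective, non-decreasing, fixing `0`. -/
def ReparamRest (h : ℝ → ℝ) : Prop :=
  Monotone h ∧ Continuous h ∧ Function.Surjective h ∧ h 0 = 0

/-- Positive expansiveness in the sense of Bowen–Walters. -/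
def PosExpansive {X : Type*} [MetricSpace X] (φ : ℝ → X → X) : Prop :=
  ∀ ε > (0 : ℝ), ∃ δ > (0 : ℝ), ∀ x y : X, ∀ h : ℝ → ℝ, Reparam h →
    (∀ t ≥ (0 : ℝ), dist (φ (h t) x) (φ t y) < δ) →
    ∃ s : ℝ, |s| ≤ ε ∧ y = φ s x

/-- The orbit of a point under the flow. -/
def flowOrbit {X : Type*} (φ : ℝ → X → X) (x : X) : Set X := Set.range fun t => φ t x

/-- The Fréchet distance between the positive trajectories of two points:
`d_F(x,y) = inf over pairs of reparameterizations with rests of sup over t ≥ 0`. -/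
noncomputable def frechetDist {X : Type*} [MetricSpace X] (φ : ℝ → X → X) (x y : X) : ℝ :=
  ⨅ g : {g : (ℝ → ℝ) × (ℝ → ℝ) // ReparamRest g.1 ∧ ReparamRest g.2},
    ⨆ t : Set.Ici (0 : ℝ), dist (φ ((g : (ℝ → ℝ) × (ℝ → ℝ)).1 (t : ℝ)) x)
      (φ ((g : (ℝ → ℝ) × (ℝ → ℝ)).2 (t : ℝ)) y)

lemma reparam_add_arctan (h : ℝ → ℝ) (hh : ReparamRest h) {c : ℝ} (hc : 0 < c) :
    Reparam (fun t => h t + c * Real.arctan t) := by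
  obtain ⟨hmono, hcont, hsurj, h0⟩ := hh
  have hpi : Real.pi / 2 ≤ 2 := by nlinarith [Real.pi_le_four]
  set f : ℝ → ℝ := fun t => h t + c * Real.arctan t with hf
  have hfc : Continuous f := hcont.add (continuous_const.mul Real.continuous_arctan)
  have hfs : StrictMono f := hmono.add_strictMono
    (fun a b hab => mul_lt_mul_of_pos_left (Real.arctan_strictMono hab) hc)
  refine ⟨hfs, hfc, ?_, by simp [hf, h0, Real.arctan_zero]⟩
  intro v
  obtain ⟨a, ha⟩ := hsurj (v - 2 * c)
  obtain ⟨b, hb⟩ := hsurj (v + 2 * c)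
  have hab : a ≤ b := by
    by_contra hba
    push_neg at hba
    have := hmono hba.le
    rw [ha, hb] at this
    linarith
  have hfa : f a ≤ v := by
    have h1 : Real.arctan a ≤ Real.pi / 2 := (Real.arctan_lt_pi_div_two a).le
    have h2 : c * Real.arctan a ≤ 2 * c := by nlinarith
    show h a + c * Real.arctan a ≤ v
    rw [ha]; linarith
  have hfb : v ≤ f b := by
    have h1 : -(Real.pi / 2) ≤ Real.arctan b := (Real.neg_pi_div_two_lt_arctan b).le
    have h2 : -(2 * c) ≤ c * Real.arctan b := by nlinarith
    show v ≤ h b + c * Real.arctan b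
    rw [hb]; linarith
  obtain ⟨t, -, ht⟩ := intermediate_value_Icc hab hfc.continuousOn ⟨hfa, hfb⟩
  exact ⟨t, ht⟩

/-- If the Fréchet distance between two points is small, then the trajectories stay
close for some genuine reparameterization. -/
theorem frechet_small_implies_reparam_close
    {X : Type*} [MetricSpace X] [CompactSpace X] (φ : ℝ → X → X) (hφ : IsFlow φ) :
    ∀ δ > (0 : ℝ), ∃ δ' > (0 : ℝ), ∀ x y : X, frechetDist φ x y < δ' →
      ∃ h : ℝ → ℝ, Reparam h ∧ ∀ t ≥ (0 : ℝ), dist (φ (h t) x) (φ t y) < δ := by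
  obtain ⟨hc, h0, hadd⟩ := hφ
  intro δ hδ
  -- tube lemma: get η > 0 with dist (φ w z) z < δ/4 for all |w| < η, z
  obtain ⟨u, v, hu, -, h0u, hvu, hprod⟩ :=
    generalized_tube_lemma (isCompact_singleton (x := (0:ℝ))) isCompact_univ
      (isOpen_lt (hc.dist continuous_snd) (continuous_const (y := δ/4)))
      (by
        rintro ⟨w, z⟩ ⟨hw, -⟩
        simp only [mem_singleton_iff] at hw
        have hz : dist (φ w z) z = 0 := by rw [hw, h0, dist_self]
        simp only [mem_setOf_eq, hz]
        positivity)
  obtain ⟨η, hη, hball⟩ := Metric.isOpen_iff.1 hu 0 (h0u rfl)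
  have key : ∀ (w : ℝ) (z : X), |w| < η → dist (φ w z) z < δ / 4 := by
    intro w z hw
    have : (w, z) ∈ u ×ˢ v := ⟨hball (by simpa [Real.dist_eq] using hw), hvu (mem_univ z)⟩
    exact hprod this
  refine ⟨δ / 2, by linarith, ?_⟩
  intro x y hxy
  haveI : Nonempty {g : (ℝ → ℝ) × (ℝ → ℝ) // ReparamRest g.1 ∧ ReparamRest g.2} :=
    ⟨⟨(id, id), ⟨monotone_id, continuous_id, Function.surjective_id, rfl⟩,
      ⟨monotone_id, continuous_id, Function.surjective_id, rfl⟩⟩⟩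
  obtain ⟨g, hg⟩ := exists_lt_of_ciInf_lt hxy
  obtain ⟨⟨h₁, h₂⟩, hr₁, hr₂⟩ := g
  simp only at hg hr₁ hr₂
  have hbdd : BddAbove (Set.range fun t : Set.Ici (0:ℝ) =>
      dist (φ (h₁ (t : ℝ)) x) (φ (h₂ (t : ℝ)) y)) := by
    refine ⟨Metric.diam (univ : Set X), ?_⟩
    rintro r ⟨t, rfl⟩
    exact Metric.dist_le_diam_of_mem isCompact_univ.isBounded (mem_univ _) (mem_univ _)
  have key2 : ∀ t ≥ (0:ℝ), dist (φ (h₁ t) x) (φ (h₂ t) y) < δ / 2 := by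
    intro t ht
    exact lt_of_le_of_lt (le_ciSup hbdd ⟨t, ht⟩) hg
  set c : ℝ := η / 4 with hc_def
  have hcpos : 0 < c := by positivity
  set H₁ : ℝ → ℝ := fun t => h₁ t + c * Real.arctan t with hH₁
  set H₂ : ℝ → ℝ := fun t => h₂ t + c * Real.arctan t with hH₂
  have hR1 : Reparam H₁ := reparam_add_arctan h₁ hr₁ hcpos
  have hR2 : Reparam H₂ := reparam_add_arctan h₂ hr₂ hcpos
  set e : ℝ ≃o ℝ := StrictMono.orderIsoOfSurjective H₂ hR2.1 hR2.2.2.1 with he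
  have he_app : ∀ t, e t = H₂ t := fun t => rfl
  have he0 : e.symm 0 = 0 := by
    have h1 : e 0 = 0 := by rw [he_app]; exact hR2.2.2.2
    exact e.injective (by rw [OrderIso.apply_symm_apply, h1])
  have hτ : ∀ t : ℝ, |c * Real.arctan t| < η := by
    intro t
    rw [abs_mul, abs_of_pos hcpos]
    have h1 : |Real.arctan t| < Real.pi / 2 :=
      abs_lt.2 ⟨Real.neg_pi_div_two_lt_arctan t, Real.arctan_lt_pi_div_two t⟩
    have h2 : Real.pi / 2 ≤ 2 := by nlinarith [Real.pi_le_four]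
    have h3 : |Real.arctan t| < 2 := lt_of_lt_of_le h1 h2
    calc c * |Real.arctan t| < c * 2 := by
          exact mul_lt_mul_of_pos_left h3 hcpos
      _ < η := by rw [hc_def]; linarith
  refine ⟨fun s => H₁ (e.symm s), ⟨hR1.1.comp e.symm.strictMono,
    hR1.2.1.comp e.toHomeomorph.symm.continuous,
    hR1.2.2.1.comp e.symm.surjective, by
      show H₁ (e.symm 0) = 0
      rw [he0]; exact hR1.2.2.2⟩, ?_⟩
  intro s hs
  set t : ℝ := e.symm s with ht_def
  have ht0 : (0:ℝ) ≤ t := by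
    rw [ht_def, ← he0]
    exact e.symm.monotone hs
  have hts : H₂ t = s := by
    rw [← he_app, ht_def, OrderIso.apply_symm_apply]
  have e1 : φ (H₁ t) x = φ (c * Real.arctan t) (φ (h₁ t) x) := by
    rw [hH₁]
    simp only []
    rw [add_comm, hadd]
  have e2 : φ s y = φ (c * Real.arctan t) (φ (h₂ t) y) := by
    rw [← hts, hH₂]
    simp only []
    rw [add_comm, hadd]
  have d1 : dist (φ (H₁ t) x) (φ (h₁ t) x) < δ / 4 := by
    rw [e1]; exact key _ _ (hτ t)
  have d2 : dist (φ (h₁ t) x) (φ (h₂ t) y) < δ / 2 := key2 t ht0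
  have d3 : dist (φ (h₂ t) y) (φ s y) < δ / 4 := by
    rw [e2, dist_comm]; exact key _ _ (hτ t)
  calc dist (φ (H₁ (e.symm s)) x) (φ s y)
      ≤ dist (φ (H₁ t) x) (φ (h₁ t) x) + dist (φ (h₁ t) x) (φ (h₂ t) y)
        + dist (φ (h₂ t) y) (φ s y) := by
        rw [← ht_def]; exact dist_triangle4 _ _ _ _
    _ < δ / 4 + δ / 2 + δ / 4 := by gcongr
    _ = δ := by ring
end

section
/- Let φ be a continuous flow on a compact metric space X. For every δ' > 0 there is δ > 0 such that if x, y ∈ X, g = (h₁,h₂) ∈ ℋ² and T > 0 satisfy d(φ_{h₁(t)}x, φ_{h₂(t)}y) < δ for all t ∈ [0,T], then there exists h ∈ ℋ⁺ with d(φ_{h(t)}x, φ_t y) < δ' for all t ∈ [0, h₂(T)]. -/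
open Metric Set

open Filter Topology

/-! Adding `c * t` with `c > 0` turns the rests of `h₁, h₂` into strictly increasing
reparameterizations `u, v`, and `h := v ∘ u⁻¹` is a genuine reparameterization. At time
`s = u t` both orbits have been pushed forward by the same time `c * t ≤ c * T`, and on a compact
space a small enough time shift moves every point uniformly little. -/

theorem eventually_forall_dist_flow_lt {X : Type*} [PseudoMetricSpace X] [CompactSpace X]
    {φ : ℝ → X → X} (hc : Continuous fun p : ℝ × X => φ p.1 p.2) (h0 : ∀ x, φ 0 x = x)
    {η : ℝ} (hη : 0 < η) : ∀ᶠ r in 𝓝 (0 : ℝ), ∀ z, dist (φ r z) z < η := by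
  have hF : Continuous fun p : ℝ × X => dist (φ p.1 p.2) p.2 := hc.dist continuous_snd
  simpa using isCompact_univ.eventually_forall_of_forall_eventually (x₀ := (0 : ℝ))
    (P := fun r z => dist (φ r z) z < η) fun z _ =>
      hF.continuousAt.eventually_lt continuousAt_const (by simpa [h0] using hη)

theorem dist_flow_add_lt {X : Type*} [PseudoMetricSpace X] {φ : ℝ → X → X}
    (hadd : ∀ s t x, φ (s + t) x = φ s (φ t x)) {r a b η δ : ℝ} {x y : X}
    (hr : ∀ z, dist (φ r z) z < η) (hab : dist (φ a x) (φ b y) < δ) :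
    dist (φ (a + r) x) (φ (b + r) y) < η + δ + η := by
  rw [add_comm a, add_comm b, hadd, hadd]
  calc dist (φ r (φ a x)) (φ r (φ b y))
      ≤ dist (φ r (φ a x)) (φ a x) + dist (φ a x) (φ b y) + dist (φ b y) (φ r (φ b y)) :=
        dist_triangle4 _ _ _ _
    _ < η + δ + η := by
        rw [dist_comm (φ b y)]
        exact add_lt_add (add_lt_add (hr _) hab) (hr _)

namespace Reparam

theorem of_orderIso (e : ℝ ≃o ℝ) (h0 : e 0 = 0) : Reparam e :=
  ⟨e.strictMono, e.continuous, e.surjective, h0⟩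

noncomputable def orderIso {u : ℝ → ℝ} (hu : Reparam u) : ℝ ≃o ℝ :=
  StrictMono.orderIsoOfSurjective u hu.1 hu.2.2.1

theorem orderIso_symm_apply_self {u : ℝ → ℝ} (hu : Reparam u) (t : ℝ) :
    hu.orderIso.symm (u t) = t :=
  StrictMono.orderIsoOfSurjective_symm_apply_self u hu.1 hu.2.2.1 t

theorem orderIso_symm {u : ℝ → ℝ} (hu : Reparam u) : Reparam hu.orderIso.symm :=
  of_orderIso _ (by simpa [hu.2.2.2] using hu.orderIso_symm_apply_self 0)

theorem comp {u v : ℝ → ℝ} (hv : Reparam v) (hu : Reparam u) : Reparam (v ∘ u) :=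
  ⟨hv.1.comp hu.1, hv.2.1.comp hu.2.1, hv.2.2.1.comp hu.2.2.1, by simp [hu.2.2.2, hv.2.2.2]⟩

end Reparam

theorem ReparamRest.reparam_add_const_mul {h : ℝ → ℝ} (hh : ReparamRest h) {c : ℝ} (hc : 0 < c) :
    Reparam fun t => h t + c * t := by
  obtain ⟨hmono, hcont, hsurj, h0⟩ := hh
  have hlin : StrictMono fun t : ℝ => c * t := strictMono_mul_left_of_pos hc
  have hcont' : Continuous fun t => h t + c * t := by fun_prop
  refine ⟨hmono.add_strictMono hlin, hcont', hcont'.surjective ?_ ?_, by simp [h0]⟩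
  · exact (hmono.tendsto_atTop_atTop fun b => (hsurj b).imp fun _ ha => ha.ge).atTop_add_atTop
      (tendsto_id.const_mul_atTop hc)
  · exact (hmono.tendsto_atBot_atBot fun b => (hsurj b).imp fun _ ha => ha.le).atBot_add_atBot
      (tendsto_id.const_mul_atBot hc)

/-- Closeness along reparameterizations with rests on `[0,T]` implies closeness along a
genuine reparameterization on `[0, h₂ T]`. -/
theorem reparamRest_close_implies_reparam_close_on_interval
    {X : Type*} [MetricSpace X] [CompactSpace X] (φ : ℝ → X → X) (hφ : IsFlow φ) :
    ∀ δ' > (0 : ℝ), ∃ δ > (0 : ℝ), ∀ x y : X, ∀ h₁ h₂ : ℝ → ℝ, ∀ T : ℝ,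
      ReparamRest h₁ → ReparamRest h₂ → 0 < T →
      (∀ t ∈ Set.Icc (0 : ℝ) T, dist (φ (h₁ t) x) (φ (h₂ t) y) < δ) →
      ∃ h : ℝ → ℝ, Reparam h ∧
        ∀ t ∈ Set.Icc (0 : ℝ) (h₂ T), dist (φ (h t) x) (φ t y) < δ' := by
  obtain ⟨hcont, hzero, hadd⟩ := hφ
  intro δ' hδ'
  obtain ⟨ε, hε, hshift⟩ := Metric.eventually_nhds_iff.1
    (eventually_forall_dist_flow_lt hcont hzero (by positivity : 0 < δ' / 3))
  refine ⟨δ' / 3, by positivity, fun x y h₁ h₂ T hr₁ hr₂ hT hclose => ?_⟩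
  set c := ε / (T + 1)
  have hc : 0 < c := by positivity
  have hcT : c * T < ε := by
    rw [div_mul_eq_mul_div, div_lt_iff₀ (by positivity)]
    nlinarith
  have hu := hr₂.reparam_add_const_mul hc
  refine ⟨_ ∘ hu.orderIso.symm, (hr₁.reparam_add_const_mul hc).comp hu.orderIso_symm,
    fun s hs => ?_⟩
  obtain ⟨t, ht, rfl⟩ : s ∈ (fun t => h₂ t + c * t) '' Icc 0 T :=
    intermediate_value_Icc hT.le hu.2.1.continuousOn
      ⟨by simpa [hr₂.2.2.2] using hs.1, hs.2.trans (by simp; positivity)⟩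
  have hct : dist (c * t) 0 < ε := by
    rw [Real.dist_0_eq_abs, abs_of_nonneg (by nlinarith [ht.1])]
    nlinarith [ht.2]
  simpa [hu.orderIso_symm_apply_self] using
    (dist_flow_add_lt hadd (hshift hct) (hclose t ht)).trans_eq (by ring)
end
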